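/- arXiv:1803.04181 — 4 statements merged into one kernel-verified Lean document; each statement's English description precedes it below -/
import Mathlib

section
/- Let G = (V,E,μ,w) be a weighted graph (a simple, undirected, locally finite graph with vertex weights μ : V → (0,∞) and symmetric edge weights w : E → (0,∞)) such that the weighted degree Deg(G) := sup_{x∈V} (Σ_{y~x} w_{xy})/μ_x is finite, inf_{x∈V} μ_x > 0, and G satisfies the 2-dimensional isoperimetric inequality, i.e. C_IS := inf { (w(∂Ω))²/μ(Ω) : Ω ⊆ V finite nonempty } > 0. Then every solution u : V → ℝ of the Liouville equation Δu + e^u = 0 satisfies Σ_{x∈V} e^{u(x)} μ_x ≥ C_IS / Deg(G). -/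
/-!
Write `Ω_t = {u ≥ t}`; it is finite when `∑ e^u μ < ∞`, since `μ` is bounded below. Summing
`Δu + e^u = 0` over `Ω_t`, the interior edges cancel, so `∑_{Ω_t} e^u μ` equals the flux
`∑_{∂Ω_t} w (u x - u y)`, all of whose terms are positive. The isoperimetric inequality and
Cauchy–Schwarz then give
  `C_IS μ(Ω_t) ≤ w(∂Ω_t)² ≤ (∑_V e^u μ) · ∑_{∂Ω_t} w / (u x - u y)`.
Integrating in `t` against `e^t dt`, the left side becomes `C_IS ∑_V e^u μ`, while each edge
contributes `w (e^{u x} - e^{u y}) / (u x - u y) ≤ w e^{u x}` on the right, for a total of at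
most `Deg(G) (∑_V e^u μ)²`.
-/

open scoped ENNReal
open Finset MeasureTheory

noncomputable def expVolume : Measure ℝ :=
  volume.withDensity fun t => ENNReal.ofReal (Real.exp t)

theorem expVolume_Iic (a : ℝ) : expVolume (Set.Iic a) = ENNReal.ofReal (Real.exp a) := by
  rw [expVolume, withDensity_apply _ measurableSet_Iic,
    ← ofReal_integral_eq_lintegral_ofReal (integrableOn_exp_Iic a)
      (ae_of_all _ fun t => (Real.exp_pos t).le), integral_exp_Iic]

theorem expVolume_Ioc_mul_le (a b c : ℝ) :
    expVolume (Set.Ioc b a) * ENNReal.ofReal (c / (a - b)) ≤ ENNReal.ofReal (c * Real.exp a) := by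
  rcases le_or_gt a b with hab | hba
  · simp [Set.Ioc_eq_empty_of_le hab]
  have hvol : expVolume (Set.Ioc b a) ≤ ENNReal.ofReal (Real.exp a) * ENNReal.ofReal (a - b) := by
    rw [expVolume, withDensity_apply _ measurableSet_Ioc, ← Real.volume_Ioc, ← setLIntegral_const]
    exact setLIntegral_mono measurable_const fun t ht =>
      ENNReal.ofReal_le_ofReal (Real.exp_le_exp.2 ht.2)
  calc _ ≤ ENNReal.ofReal (Real.exp a) * ENNReal.ofReal (a - b) * ENNReal.ofReal (c / (a - b)) :=
        by gcongr
    _ = ENNReal.ofReal (c * Real.exp a) := by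
      rw [← ENNReal.ofReal_mul (Real.exp_pos a).le,
        ← ENNReal.ofReal_mul (mul_nonneg (Real.exp_pos a).le (sub_pos.2 hba).le)]
      congr 1
      field_simp [(sub_pos.2 hba).ne']

theorem countable_of_forall_finite_setOf_le {V : Type*} {u : V → ℝ}
    (hu : ∀ t, {x | t ≤ u x}.Finite) : Countable V := by
  refine Set.countable_univ_iff.1 (Set.Countable.mono (fun x _ => ?_)
    (Set.countable_iUnion fun n : ℕ => (hu (-n)).countable))
  obtain ⟨n, hn⟩ := exists_nat_ge (-u x)
  exact Set.mem_iUnion.2 ⟨n, neg_le.1 hn⟩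

theorem finite_setOf_le_of_tsum_ne_top {V : Type*} {μ u : V → ℝ}
    (hA : ∑' x, ENNReal.ofReal (Real.exp (u x) * μ x) ≠ ∞) (hμ : 0 < ⨅ x, μ x) (t : ℝ) :
    {x | t ≤ u x}.Finite := by
  have hbdd : BddBelow (Set.range μ) := by
    by_contra h
    exact hμ.ne' (Real.iInf_of_not_bddBelow h)
  refine (ENNReal.finite_const_le_of_tsum_ne_top hA
    (ENNReal.ofReal_pos.2 (mul_pos (Real.exp_pos t) hμ)).ne').subset fun x hx => ?_
  exact ENNReal.ofReal_le_ofReal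
    (mul_le_mul (Real.exp_le_exp.2 hx) (ciInf_le hbdd x) hμ.le (Real.exp_pos _).le)

/-- `μ({u ≥ t})`, written as a sum of indicators in `t` so that Tonelli applies. -/
noncomputable def levelMass {V : Type*} (μ u : V → ℝ) (t : ℝ) : ℝ≥0∞ :=
  ∑' x, (Set.Iic (u x)).indicator (fun _ => ENNReal.ofReal (μ x)) t

theorem levelMass_eq_ofReal_sum {V : Type*} {μ u : V → ℝ} (hμ : ∀ x, 0 ≤ μ x) {Ω : Finset V}
    {t : ℝ} (hΩ : ∀ x, x ∈ Ω ↔ t ≤ u x) :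
    levelMass μ u t = ENNReal.ofReal (∑ x ∈ Ω, μ x) := by
  have hsupp : ∀ x ∉ Ω, (Set.Iic (u x)).indicator (fun _ => ENNReal.ofReal (μ x)) t = 0 :=
    fun x hx => Set.indicator_of_notMem (show t ∉ Set.Iic (u x) from fun h => hx ((hΩ x).2 h)) _
  rw [levelMass, tsum_eq_sum hsupp, ENNReal.ofReal_sum_of_nonneg fun x _ => hμ x]
  exact sum_congr rfl fun x hx =>
    Set.indicator_of_mem (show t ∈ Set.Iic (u x) from (hΩ x).1 hx) _

theorem lintegral_levelMass {V : Type*} [Countable V] (μ u : V → ℝ) :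
    ∫⁻ t, levelMass μ u t ∂expVolume = ∑' x, ENNReal.ofReal (Real.exp (u x) * μ x) := by
  simp only [levelMass]
  rw [lintegral_tsum fun x => (measurable_const.indicator measurableSet_Iic).aemeasurable]
  refine tsum_congr fun x => ?_
  rw [lintegral_indicator_const measurableSet_Iic, expVolume_Iic, mul_comm,
    ENNReal.ofReal_mul (Real.exp_pos _).le]

namespace SimpleGraph

variable {V : Type*} (G : SimpleGraph V) [∀ v, Fintype (G.neighborSet v)]

noncomputable def laplacian (w : V → V → ℝ) (μ u : V → ℝ) (x : V) : ℝ :=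
  (∑ y ∈ G.neighborFinset x, w x y * (u y - u x)) / μ x

noncomputable def weightedDegree (w : V → V → ℝ) (μ : V → ℝ) (x : V) : ℝ :=
  (∑ y ∈ G.neighborFinset x, w x y) / μ x

/-- `∑ w / (u x - u y)` over the edges leaving `{u ≥ t}`: the discrete `∫_{u = t} 1 / |∇u|`. -/
noncomputable def levelBoundary (w : V → V → ℝ) (u : V → ℝ) (t : ℝ) : ℝ≥0∞ :=
  ∑' x, ∑ y ∈ G.neighborFinset x,
    (Set.Ioc (u y) (u x)).indicator (fun _ => ENNReal.ofReal (w x y / (u x - u y))) t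

variable {G} {w : V → V → ℝ} {μ u : V → ℝ}

theorem sum_mul_sub_eq_exp_mul {x : V} (hμ : μ x ≠ 0)
    (hu : G.laplacian w μ u x + Real.exp (u x) = 0) :
    ∑ y ∈ G.neighborFinset x, w x y * (u x - u y) = Real.exp (u x) * μ x := by
  have hflip : ∑ y ∈ G.neighborFinset x, w x y * (u x - u y)
      = -∑ y ∈ G.neighborFinset x, w x y * (u y - u x) := by
    rw [← sum_neg_distrib]
    exact sum_congr rfl fun y _ => by ring
  rw [laplacian, div_add' _ _ _ hμ, div_eq_zero_iff, or_iff_left hμ] at hu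
  linarith

theorem lintegral_levelBoundary_le [Countable V] :
    ∫⁻ t, G.levelBoundary w u t ∂expVolume ≤
      ∑' x, ∑ y ∈ G.neighborFinset x, ENNReal.ofReal (w x y * Real.exp (u x)) := by
  simp only [levelBoundary]
  rw [lintegral_tsum fun x => (Finset.measurable_sum _ fun y _ =>
    measurable_const.indicator measurableSet_Ioc).aemeasurable]
  refine ENNReal.tsum_le_tsum fun x => ?_
  rw [lintegral_finsetSum _ fun y _ => measurable_const.indicator measurableSet_Ioc]
  gcongr with y
  rw [lintegral_indicator_const measurableSet_Ioc, mul_comm]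
  exact expVolume_Ioc_mul_le _ _ _

theorem tsum_sum_neighborFinset_le (hw : ∀ x y, G.Adj x y → 0 ≤ w x y) (hμ : ∀ x, 0 < μ x)
    (hdeg : BddAbove (Set.range (G.weightedDegree w μ))) :
    ∑' x, ∑ y ∈ G.neighborFinset x, ENNReal.ofReal (w x y * Real.exp (u x)) ≤
      ENNReal.ofReal (⨆ x, G.weightedDegree w μ x) *
        ∑' x, ENNReal.ofReal (Real.exp (u x) * μ x) := by
  rw [← ENNReal.tsum_mul_left]
  refine ENNReal.tsum_le_tsum fun x => ?_
  have hx : ∑ y ∈ G.neighborFinset x, w x y ≤ (⨆ x, G.weightedDegree w μ x) * μ x :=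
    (div_le_iff₀ (hμ x)).1 (le_ciSup hdeg x)
  rw [← ENNReal.ofReal_sum_of_nonneg fun y hy =>
      mul_nonneg (hw x y ((mem_neighborFinset _ _ _).1 hy)) (Real.exp_pos _).le,
    ← ENNReal.ofReal_mul' (mul_nonneg (Real.exp_pos _).le (hμ x).le), ← sum_mul]
  refine ENNReal.ofReal_le_ofReal ?_
  calc (∑ y ∈ G.neighborFinset x, w x y) * Real.exp (u x)
      ≤ (⨆ x, G.weightedDegree w μ x) * μ x * Real.exp (u x) := by gcongr
    _ = _ := by ring

variable (G) [DecidableEq V]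

noncomputable def boundarySum (f : V → V → ℝ) (Ω : Finset V) : ℝ :=
  ∑ x ∈ Ω, ∑ y ∈ (G.neighborFinset x).filter (fun y => y ∉ Ω), f x y

noncomputable def isoperimetricConst (w : V → V → ℝ) (μ : V → ℝ) : ℝ :=
  ⨅ Ω : {s : Finset V // s.Nonempty}, G.boundarySum w Ω.1 ^ 2 / ∑ x ∈ Ω.1, μ x

theorem sum_sum_neighborFinset_eq_boundarySum {f : V → V → ℝ}
    (hf : ∀ x y, G.Adj x y → f y x = -f x y) (Ω : Finset V) :
    ∑ x ∈ Ω, ∑ y ∈ G.neighborFinset x, f x y = G.boundarySum f Ω := by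
  classical
  set g : V → V → ℝ := fun x y => if G.Adj x y then f x y else 0
  have hinner : ∀ x, ∑ y ∈ (G.neighborFinset x).filter (· ∈ Ω), f x y = ∑ y ∈ Ω, g x y := by
    intro x
    rw [sum_ite, sum_const_zero, add_zero]
    exact sum_congr (by ext; simp [and_comm]) fun _ _ => rfl
  have hg : ∀ x y, g y x = -g x y := fun x y => by
    by_cases h : G.Adj x y
    · simp [g, h, h.symm, hf x y h]
    · have h' : ¬G.Adj y x := fun h' => h h'.symm
      simp [g, h, h']
  have hcancel : ∑ x ∈ Ω, ∑ y ∈ Ω, g x y = 0 := by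
    have hanti : ∑ x ∈ Ω, ∑ y ∈ Ω, g x y = -∑ x ∈ Ω, ∑ y ∈ Ω, g x y := by
      conv_lhs => rw [sum_comm]
      simp only [← sum_neg_distrib]
      exact sum_congr rfl fun x _ => sum_congr rfl fun y _ => hg x y
    linarith
  calc ∑ x ∈ Ω, ∑ y ∈ G.neighborFinset x, f x y
      = ∑ x ∈ Ω, (∑ y ∈ (G.neighborFinset x).filter (· ∈ Ω), f x y
          + ∑ y ∈ (G.neighborFinset x).filter (· ∉ Ω), f x y) :=
        sum_congr rfl fun x _ => (sum_filter_add_sum_filter_not _ _ _).symm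
    _ = G.boundarySum f Ω := by
        rw [sum_add_distrib, sum_congr rfl fun x _ => hinner x, hcancel, zero_add]
        rfl

variable {G} {w : V → V → ℝ} {μ u : V → ℝ}

theorem boundarySum_mul_sub_eq_sum_exp_mul (hw : ∀ x y, G.Adj x y → w x y = w y x)
    (hμ : ∀ x, μ x ≠ 0) (hu : ∀ x, G.laplacian w μ u x + Real.exp (u x) = 0) (Ω : Finset V) :
    G.boundarySum (fun x y => w x y * (u x - u y)) Ω = ∑ x ∈ Ω, Real.exp (u x) * μ x := by
  rw [← G.sum_sum_neighborFinset_eq_boundarySum fun x y h => by rw [hw x y h]; ring]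
  exact sum_congr rfl fun x _ => sum_mul_sub_eq_exp_mul (hμ x) (hu x)

theorem sq_boundarySum_le (hw : ∀ x y, G.Adj x y → 0 ≤ w x y) {Ω : Finset V}
    (hu : ∀ x ∈ Ω, ∀ y ∉ Ω, G.Adj x y → u y < u x) :
    G.boundarySum w Ω ^ 2 ≤ G.boundarySum (fun x y => w x y * (u x - u y)) Ω *
      G.boundarySum (fun x y => w x y / (u x - u y)) Ω := by
  have hedge : ∀ p ∈ Ω.sigma fun x => (G.neighborFinset x).filter (· ∉ Ω),
      0 ≤ w p.1 p.2 ∧ 0 < u p.1 - u p.2 := by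
    rintro ⟨x, y⟩ hp
    simp only [mem_sigma, mem_filter, mem_neighborFinset] at hp
    exact ⟨hw x y hp.2.1, sub_pos.2 (hu x hp.1 y hp.2.2 hp.2.1)⟩
  simp only [boundarySum, sum_sigma']
  refine sum_sq_le_sum_mul_sum_of_sq_le_mul _
    (fun p hp => mul_nonneg (hedge p hp).1 (hedge p hp).2.le)
    (fun p hp => div_nonneg (hedge p hp).1 (hedge p hp).2.le) fun p hp => le_of_eq ?_
  field_simp [(hedge p hp).2.ne']

theorem isoperimetricConst_nonneg (hμ : ∀ x, 0 ≤ μ x) : 0 ≤ G.isoperimetricConst w μ :=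
  Real.iInf_nonneg fun _ => div_nonneg (sq_nonneg _) (sum_nonneg fun x _ => hμ x)

theorem isoperimetricConst_mul_le (hμ : ∀ x, 0 < μ x) (Ω : Finset V) :
    G.isoperimetricConst w μ * ∑ x ∈ Ω, μ x ≤ G.boundarySum w Ω ^ 2 := by
  rcases Ω.eq_empty_or_nonempty with rfl | hne
  · simpa using sq_nonneg _
  rw [← le_div_iff₀ (sum_pos (fun x _ => hμ x) hne)]
  refine ciInf_le ⟨0, ?_⟩ (⟨Ω, hne⟩ : {s : Finset V // s.Nonempty})
  rintro _ ⟨Ω', rfl⟩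
  exact div_nonneg (sq_nonneg _) (sum_nonneg fun x _ => (hμ x).le)

theorem isoperimetricConst_mul_le_sum_exp_mul_mul (hw_symm : ∀ x y, G.Adj x y → w x y = w y x)
    (hw : ∀ x y, G.Adj x y → 0 ≤ w x y) (hμ : ∀ x, 0 < μ x)
    (hu : ∀ x, G.laplacian w μ u x + Real.exp (u x) = 0) {Ω : Finset V}
    (hΩ : ∀ x ∈ Ω, ∀ y ∉ Ω, G.Adj x y → u y < u x) :
    G.isoperimetricConst w μ * ∑ x ∈ Ω, μ x ≤
      (∑ x ∈ Ω, Real.exp (u x) * μ x) * G.boundarySum (fun x y => w x y / (u x - u y)) Ω :=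
  calc _ ≤ G.boundarySum w Ω ^ 2 := isoperimetricConst_mul_le hμ Ω
    _ ≤ _ := sq_boundarySum_le hw hΩ
    _ = _ := by rw [boundarySum_mul_sub_eq_sum_exp_mul hw_symm (fun x => (hμ x).ne') hu]

theorem ofReal_boundarySum_le_levelBoundary (hw : ∀ x y, G.Adj x y → 0 ≤ w x y) {Ω : Finset V}
    {t : ℝ} (hΩ : ∀ x, x ∈ Ω ↔ t ≤ u x) :
    ENNReal.ofReal (G.boundarySum (fun x y => w x y / (u x - u y)) Ω) ≤ G.levelBoundary w u t := by
  have hedge : ∀ x ∈ Ω, ∀ y ∈ (G.neighborFinset x).filter (· ∉ Ω),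
      G.Adj x y ∧ u y < t ∧ t ≤ u x := by
    intro x hx y hy
    rw [mem_filter, mem_neighborFinset, hΩ, not_le] at hy
    exact ⟨hy.1, hy.2, (hΩ x).1 hx⟩
  have hterm : ∀ x ∈ Ω, ∀ y ∈ (G.neighborFinset x).filter (· ∉ Ω), 0 ≤ w x y / (u x - u y) :=
    fun x hx y hy =>
      have h := hedge x hx y hy
      div_nonneg (hw x y h.1) (sub_pos.2 (h.2.1.trans_le h.2.2)).le
  rw [boundarySum, ENNReal.ofReal_sum_of_nonneg fun x hx => sum_nonneg (hterm x hx)]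
  refine le_trans (sum_le_sum fun x hx => ?_) (ENNReal.sum_le_tsum Ω)
  rw [ENNReal.ofReal_sum_of_nonneg (hterm x hx)]
  calc _ = ∑ y ∈ (G.neighborFinset x).filter (· ∉ Ω),
          (Set.Ioc (u y) (u x)).indicator (fun _ => ENNReal.ofReal (w x y / (u x - u y))) t :=
        sum_congr rfl fun y hy =>
          (Set.indicator_of_mem (show t ∈ Set.Ioc (u y) (u x) from (hedge x hx y hy).2) _).symm
    _ ≤ _ := sum_le_sum_of_subset (filter_subset _ _)

theorem ofReal_isoperimetricConst_mul_levelMass_le (hw_symm : ∀ x y, G.Adj x y → w x y = w y x)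
    (hw : ∀ x y, G.Adj x y → 0 ≤ w x y) (hμ : ∀ x, 0 < μ x)
    (hu : ∀ x, G.laplacian w μ u x + Real.exp (u x) = 0)
    {t : ℝ} (hfin : {x | t ≤ u x}.Finite) :
    ENNReal.ofReal (G.isoperimetricConst w μ) * levelMass μ u t ≤
      (∑' x, ENNReal.ofReal (Real.exp (u x) * μ x)) * G.levelBoundary w u t := by
  set Ω := hfin.toFinset
  have hΩ : ∀ x, x ∈ Ω ↔ t ≤ u x := fun x => hfin.mem_toFinset
  have hbdry : ∀ x ∈ Ω, ∀ y ∉ Ω, G.Adj x y → u y < u x := fun x hx y hy _ =>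
    (not_le.1 fun h => hy ((hΩ y).2 h)).trans_le ((hΩ x).1 hx)
  have hmass_nonneg : 0 ≤ ∑ x ∈ Ω, Real.exp (u x) * μ x :=
    sum_nonneg fun x _ => (mul_pos (Real.exp_pos _) (hμ x)).le
  have hmass : ENNReal.ofReal (∑ x ∈ Ω, Real.exp (u x) * μ x) ≤
      ∑' x, ENNReal.ofReal (Real.exp (u x) * μ x) := by
    rw [ENNReal.ofReal_sum_of_nonneg fun x _ => (mul_pos (Real.exp_pos _) (hμ x)).le]
    exact ENNReal.sum_le_tsum Ω
  calc ENNReal.ofReal (G.isoperimetricConst w μ) * levelMass μ u t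
      = ENNReal.ofReal (G.isoperimetricConst w μ * ∑ x ∈ Ω, μ x) := by
        rw [levelMass_eq_ofReal_sum (fun x => (hμ x).le) hΩ,
          ENNReal.ofReal_mul' (sum_nonneg fun x _ => (hμ x).le)]
    _ ≤ ENNReal.ofReal ((∑ x ∈ Ω, Real.exp (u x) * μ x) *
          G.boundarySum (fun x y => w x y / (u x - u y)) Ω) :=
        ENNReal.ofReal_le_ofReal
          (isoperimetricConst_mul_le_sum_exp_mul_mul hw_symm hw hμ hu hbdry)
    _ ≤ _ := by
        rw [ENNReal.ofReal_mul hmass_nonneg]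
        exact mul_le_mul' hmass (ofReal_boundarySum_le_levelBoundary hw hΩ)

end SimpleGraph

theorem liouville_energy_lower_bound_general
    {V : Type*} [Nonempty V] [DecidableEq V]
    (G : SimpleGraph V) [∀ v, Fintype (G.neighborSet v)]
    (w : V → V → ℝ) (μ : V → ℝ)
    (hw_symm : ∀ x y, w x y = w y x)
    (hw_pos : ∀ x y, G.Adj x y → 0 < w x y)
    (hμ_pos : ∀ x, 0 < μ x)
    (hμ_inf : 0 < ⨅ x, μ x)
    (hDeg_bdd : BddAbove (Set.range fun x => (∑ y ∈ G.neighborFinset x, w x y) / μ x))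
    (u : V → ℝ)
    (hu : ∀ x, (∑ y ∈ G.neighborFinset x, w x y * (u y - u x)) / μ x + Real.exp (u x) = 0) :
    ENNReal.ofReal
        ((⨅ Ω : {s : Finset V // s.Nonempty},
            (∑ x ∈ Ω.1, ∑ y ∈ (G.neighborFinset x).filter (fun y => y ∉ Ω.1), w x y) ^ 2
              / ∑ x ∈ Ω.1, μ x)
          / (⨆ x, (∑ y ∈ G.neighborFinset x, w x y) / μ x))
      ≤ ∑' x, ENNReal.ofReal (Real.exp (u x) * μ x) := by
  set A := ∑' x, ENNReal.ofReal (Real.exp (u x) * μ x)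
  change ENNReal.ofReal (G.isoperimetricConst w μ / ⨆ x, G.weightedDegree w μ x) ≤ A
  set C := G.isoperimetricConst w μ
  set D := ⨆ x, G.weightedDegree w μ x
  rcases eq_or_ne A ∞ with hA | hA
  · exact hA ▸ le_top
  rcases le_or_gt D 0 with hD | hD
  · have hC : 0 ≤ C := SimpleGraph.isoperimetricConst_nonneg fun x => (hμ_pos x).le
    simp [ENNReal.ofReal_of_nonpos (div_nonpos_of_nonneg_of_nonpos hC hD)]
  have hw : ∀ x y, G.Adj x y → 0 ≤ w x y := fun x y h => (hw_pos x y h).le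
  have hfin := finite_setOf_le_of_tsum_ne_top hA hμ_inf
  have := countable_of_forall_finite_setOf_le hfin
  have hA0 : A ≠ 0 := fun h => (ENNReal.ofReal_pos.2 (mul_pos (Real.exp_pos _) (hμ_pos _))).ne'
    (ENNReal.tsum_eq_zero.1 h (Classical.arbitrary V))
  have key : ENNReal.ofReal C * A ≤ A * ENNReal.ofReal D * A :=
    calc ENNReal.ofReal C * A = ∫⁻ t, ENNReal.ofReal C * levelMass μ u t ∂expVolume := by
          rw [lintegral_const_mul' _ _ ENNReal.ofReal_ne_top, lintegral_levelMass]
      _ ≤ ∫⁻ t, A * G.levelBoundary w u t ∂expVolume := lintegral_mono fun t =>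
          SimpleGraph.ofReal_isoperimetricConst_mul_levelMass_le (fun x y _ => hw_symm x y) hw
            hμ_pos hu (hfin t)
      _ = A * ∫⁻ t, G.levelBoundary w u t ∂expVolume := lintegral_const_mul' _ _ hA
      _ ≤ A * (ENNReal.ofReal D * A) := by
          grw [SimpleGraph.lintegral_levelBoundary_le,
            SimpleGraph.tsum_sum_neighborFinset_le hw hμ_pos hDeg_bdd]
      _ = A * ENNReal.ofReal D * A := (mul_assoc _ _ _).symm
  rw [ENNReal.ofReal_div_of_pos hD]
  exact ENNReal.div_le_of_le_mul ((ENNReal.mul_le_mul_iff_left hA0 hA).1 key)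

theorem liouville_energy_lower_bound
    {V : Type*} [Nonempty V] [DecidableEq V]
    (G : SimpleGraph V) [DecidableRel G.Adj] [∀ v, Fintype (G.neighborSet v)]
    (w : V → V → ℝ) (μ : V → ℝ)
    (hw_symm : ∀ x y, w x y = w y x)
    (hw_pos : ∀ x y, G.Adj x y → 0 < w x y)
    (hμ_pos : ∀ x, 0 < μ x)
    (hμ_inf : 0 < ⨅ x, μ x)
    (hDeg_bdd : BddAbove (Set.range fun x => (∑ y ∈ G.neighborFinset x, w x y) / μ x))
    (hIS : 0 < ⨅ Ω : {s : Finset V // s.Nonempty},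
        (∑ x ∈ Ω.1, ∑ y ∈ (G.neighborFinset x).filter (fun y => y ∉ Ω.1), w x y) ^ 2
          / ∑ x ∈ Ω.1, μ x)
    (u : V → ℝ)
    (hu : ∀ x, (∑ y ∈ G.neighborFinset x, w x y * (u y - u x)) / μ x + Real.exp (u x) = 0) :
    ENNReal.ofReal
        ((⨅ Ω : {s : Finset V // s.Nonempty},
            (∑ x ∈ Ω.1, ∑ y ∈ (G.neighborFinset x).filter (fun y => y ∉ Ω.1), w x y) ^ 2
              / ∑ x ∈ Ω.1, μ x)
          / (⨆ x, (∑ y ∈ G.neighborFinset x, w x y) / μ x))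
      ≤ ∑' x, ENNReal.ofReal (Real.exp (u x) * μ x) :=
  liouville_energy_lower_bound_general G w μ hw_symm hw_pos hμ_pos hμ_inf hDeg_bdd u hu
end

section
/- Let ℤ² be the standard lattice graph whose vertex set is ℤ², with an edge between (x₁,y₁) and (x₂,y₂) if and only if |x₁−x₂| + |y₁−y₂| = 1, with vertex weights μ ≡ 4 and edge weights w ≡ 1. Then every solution u : ℤ² → ℝ of Δu + e^u = 0, where Δu(x) = (1/4) Σ_{y~x} (u(y) − u(x)), satisfies Σ_{x∈ℤ²} 4·e^{u(x)} ≥ 4 (equivalently Σ_{x∈ℤ²} e^{u(x)} ≥ 1). -/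
/-!
We may assume `S = ∑ₓ e^{u(x)}` finite, so that `u ≤ log S`. For a level `t < u(0)`, the
truncation `φ = (u - t)⁺` lives on at most `S e^{-t}` vertices, and because `ℓ ↦ (ℓ - t)⁺` is
monotone and 1-Lipschitz, summation by parts against `-Δu = e^u` bounds its Dirichlet energy by
`4 S (log S - t)`.

On the other hand `ℤ²` carries an explicit unit flow `θ` from the origin to infinity whose energy
on any `m` edges is at most `(log m) / 8 + O(1)`, a quantitative form of recurrence. Pairing `θ`
with the gradient of `φ` recovers `φ(0) = u(0) - t`, so by Cauchy–Schwarz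
`(u(0) - t)² ≤ (L / 8 + O(1)) · 4 S L` with `L = log S - t`, which is impossible for large `L`
when `S < 1`.
-/

open Finset

theorem sum_range_le_of_le_sub_succ {f g : ℕ → ℝ} (h : ∀ i, f i ≤ g i - g (i + 1)) (n : ℕ) :
    ∑ i ∈ range n, f i ≤ g 0 - g n :=
  (sum_le_sum fun i _ => h i).trans_eq (sum_range_sub' g n)

theorem sum_range_inv_add_two_sq_le_one (n : ℕ) : ∑ i ∈ range n, 1 / ((i : ℝ) + 2) ^ 2 ≤ 1 := by
  have step (i : ℕ) : 1 / ((i : ℝ) + 2) ^ 2 ≤ 1 / ((i : ℝ) + 1) - 1 / (((i + 1 : ℕ) : ℝ) + 1) := by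
    push_cast
    rw [div_sub_div _ _ (by positivity) (by positivity),
      div_le_div_iff₀ (by positivity) (by positivity)]
    nlinarith
  have h := sum_range_le_of_le_sub_succ step n
  have : (0 : ℝ) ≤ 1 / ((n : ℝ) + 1) := by positivity
  simp only [Nat.cast_zero, zero_add, div_one] at h
  linarith

theorem sum_range_inv_add_two_le_log (n : ℕ) :
    ∑ i ∈ range n, 1 / ((i : ℝ) + 2) ≤ Real.log (n + 1) := by
  have step (i : ℕ) :
      1 / ((i : ℝ) + 2) ≤ -Real.log ((i : ℝ) + 1) - -Real.log (((i + 1 : ℕ) : ℝ) + 1) := by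
    have h := Real.one_sub_inv_le_log_of_pos (x := ((i : ℝ) + 2) / (i + 1)) (by positivity)
    rw [Real.log_div (by positivity) (by positivity), inv_div] at h
    have e : 1 - ((i : ℝ) + 1) / (i + 2) = 1 / (i + 2) := by field_simp; ring
    rw [Nat.cast_succ, add_assoc, one_add_one_eq_two]
    linarith
  simpa using sum_range_le_of_le_sub_succ step n

theorem sum_inv_sq_mul_inv_sq_le (a : ℝ) (ha : 0 ≤ a) (n : ℕ) :
    ∑ i ∈ range n, 1 / ((a + i + 2) ^ 2 * (a + i + 3) ^ 2) ≤ 1 / ((2 * a + 5) * (a + 2) ^ 2) := by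
  have step (i : ℕ) : 1 / ((a + i + 2) ^ 2 * (a + i + 3) ^ 2)
      ≤ 1 / ((2 * a + 5) * (a + i + 2) ^ 2)
        - 1 / ((2 * a + 5) * (a + ((i + 1 : ℕ) : ℝ) + 2) ^ 2) := by
    calc 1 / ((a + i + 2) ^ 2 * (a + i + 3) ^ 2)
        = (2 * a + 5) / ((2 * a + 5) * ((a + i + 2) ^ 2 * (a + i + 3) ^ 2)) := by field_simp
      _ ≤ (2 * a + 5 + 2 * i) / ((2 * a + 5) * ((a + i + 2) ^ 2 * (a + i + 3) ^ 2)) := by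
        exact div_le_div_of_nonneg_right (by linarith [(Nat.cast_nonneg i : (0 : ℝ) ≤ i)])
          (by positivity)
      _ = _ := by push_cast; field_simp; ring
  have h := sum_range_le_of_le_sub_succ step n
  have : (0 : ℝ) ≤ 1 / ((2 * a + 5) * (a + n + 2) ^ 2) := by positivity
  simp only [Nat.cast_zero, add_zero] at h
  linarith

theorem sum_comp_le_mul_sum {α β : Type*} [DecidableEq β] {s : Finset α} {t : Finset β} {g : α → β}
    (hg : ∀ x ∈ s, g x ∈ t) {n : ℕ} (hfib : ∀ b ∈ t, #{x ∈ s | g x = b} ≤ n) {F : β → ℝ}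
    (hF : ∀ b ∈ t, 0 ≤ F b) : ∑ x ∈ s, F (g x) ≤ n * ∑ b ∈ t, F b := by
  rw [← sum_fiberwise_of_maps_to hg, mul_sum]
  refine sum_le_sum fun b hb => ?_
  rw [sum_congr rfl fun x hx => by rw [(mem_filter.mp hx).2], sum_const, nsmul_eq_mul]
  exact mul_le_mul_of_nonneg_right (by exact_mod_cast hfib b hb) (hF b hb)

theorem sq_truncation_sub_le (a b t : ℝ) :
    (max (a - t) 0 - max (b - t) 0) ^ 2 ≤ (a - b) * (max (a - t) 0 - max (b - t) 0) := by
  rcases le_total a t with ha | ha <;> rcases le_total b t with hb | hb <;>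
    simp only [max_eq_left, max_eq_right, sub_nonneg, sub_nonpos, ha, hb] <;> nlinarith

/- Calculus on the Cayley graph of `G` with respect to `d`: the edge `(p, i)` points from `p`
to `p + d i`. -/
namespace DiscreteCalculus

variable {G ι : Type*} [AddCommGroup G] (d : ι → G)

def grad (f : G → ℝ) (e : G × ι) : ℝ := f e.1 - f (e.1 + d e.2)

def div [Fintype ι] (θ : G × ι → ℝ) (p : G) : ℝ := ∑ i, (θ (p, i) - θ (p - d i, i))

def headEquiv : G × ι ≃ G × ι where
  toFun e := (e.1 + d e.2, e.2)
  invFun e := (e.1 - d e.2, e.2)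
  left_inv e := by simp
  right_inv e := by simp

def incidentEdges [Fintype ι] [DecidableEq G] [DecidableEq ι] (A : Finset G) : Finset (G × ι) :=
  A ×ˢ univ ∪ (A ×ˢ univ).map (headEquiv d).symm.toEmbedding

variable [Fintype ι]

theorem div_grad (f : G → ℝ) (p : G) :
    div d (grad d f) p = ∑ i, (2 * f p - f (p + d i) - f (p - d i)) := by
  simp only [div, grad, sub_add_cancel]
  exact Finset.sum_congr rfl fun i _ => by ring

theorem card_incidentEdges_le [DecidableEq G] [DecidableEq ι] (A : Finset G) :
    #(incidentEdges d A) ≤ 2 * (#A * Fintype.card ι) := by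
  refine (card_union_le _ _).trans ?_
  rw [card_map, card_product, card_univ]
  omega

variable {d}

theorem grad_eq_zero_of_notMem_incidentEdges [DecidableEq G] [DecidableEq ι] {φ : G → ℝ}
    {A : Finset G} (hφ : ∀ p ∉ A, φ p = 0) {e : G × ι} (he : e ∉ incidentEdges d A) :
    grad d φ e = 0 := by
  simp only [incidentEdges, mem_union, mem_product, mem_univ, and_true, mem_map_equiv,
    Equiv.symm_symm, not_or] at he
  simpa [grad, headEquiv, hφ _ he.1] using hφ _ he.2

theorem tsum_mul_grad (θ : G × ι → ℝ) {φ : G → ℝ} {A : Finset G} (hφ : ∀ p ∉ A, φ p = 0) :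
    ∑' e, θ e * grad d φ e = ∑' p, div d θ p * φ p := by
  have vanish : ∀ ψ : G × ι → ℝ, ∀ e ∉ A ×ˢ (univ : Finset ι), ψ e * φ e.1 = 0 := by
    intro ψ e he
    rw [hφ e.1 (by simpa using he), mul_zero]
  have tail : Summable fun e : G × ι => θ e * φ e.1 := summable_of_ne_finset_zero (vanish θ)
  have head : Summable fun e : G × ι => θ ((headEquiv d).symm e) * φ e.1 :=
    summable_of_ne_finset_zero (vanish _)
  have shifted : Summable fun e : G × ι => θ e * φ (e.1 + d e.2) := by
    simpa [Function.comp_def, headEquiv] using (headEquiv d).summable_iff.mpr head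
  have shift : ∑' e, θ e * φ (e.1 + d e.2) = ∑' e, θ ((headEquiv d).symm e) * φ e.1 := by
    rw [← (headEquiv d).tsum_eq (fun e => θ ((headEquiv d).symm e) * φ e.1)]
    simp [headEquiv]
  have diff : Summable fun e : G × ι => (θ e - θ ((headEquiv d).symm e)) * φ e.1 := by
    simpa only [sub_mul] using tail.sub head
  calc ∑' e, θ e * grad d φ e
      = ∑' e, θ e * φ e.1 - ∑' e, θ e * φ (e.1 + d e.2) := by
        rw [← tail.tsum_sub shifted]
        simp only [grad, mul_sub]
    _ = ∑' e, (θ e - θ ((headEquiv d).symm e)) * φ e.1 := by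
        rw [shift, ← tail.tsum_sub head]
        simp only [sub_mul]
    _ = ∑' p, div d θ p * φ p := by
        rw [diff.tsum_prod]
        simp only [tsum_fintype, div, headEquiv, Equiv.coe_fn_symm_mk, Finset.sum_mul]

theorem summable_mul_grad (θ : G × ι → ℝ) {φ : G → ℝ} {A : Finset G}
    (hφ : ∀ p ∉ A, φ p = 0) : Summable fun e => θ e * grad d φ e := by
  classical
  exact summable_of_ne_finset_zero fun e he => by
    rw [grad_eq_zero_of_notMem_incidentEdges hφ he, mul_zero]

theorem tsum_grad_truncation_sq_le (u : G → ℝ) (t : ℝ) {A : Finset G}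
    (hA : ∀ p ∉ A, max (u p - t) 0 = 0) :
    ∑' e, grad d (fun p => max (u p - t) 0) e ^ 2
      ≤ ∑' p, div d (grad d u) p * max (u p - t) 0 := by
  rw [← tsum_mul_grad _ hA]
  refine Summable.tsum_le_tsum (fun e => ?_) ?_ (summable_mul_grad _ hA)
  · exact sq_truncation_sub_le _ _ _
  · simpa only [sq] using summable_mul_grad _ hA

theorem sq_le_sum_sq_mul_tsum_grad_sq [DecidableEq G] {θ : G × ι → ℝ}
    (hθ : ∀ p, div d θ p = if p = 0 then 1 else 0) {φ : G → ℝ} {A : Finset G}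
    (hφ : ∀ p ∉ A, φ p = 0) {E : Finset (G × ι)} (hE : ∀ e ∉ E, grad d φ e = 0) :
    φ 0 ^ 2 ≤ (∑ e ∈ E, θ e ^ 2) * ∑' e, grad d φ e ^ 2 := by
  have pairing : φ 0 = ∑ e ∈ E, θ e * grad d φ e := by
    rw [← tsum_eq_sum (L := .unconditional _) fun e he => by rw [hE e he, mul_zero],
      tsum_mul_grad θ hφ,
      tsum_eq_single 0 fun p hp => by rw [hθ, if_neg hp, zero_mul], hθ, if_pos rfl, one_mul]
  rw [pairing, tsum_eq_sum fun e he => by rw [hE e he, zero_pow two_ne_zero]]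
  exact sum_mul_sq_le_sq_mul_sq E θ (grad d φ)

end DiscreteCalculus

open DiscreteCalculus

section SummableExp

variable {α : Type*} {u : α → ℝ} (hs : Summable fun p => Real.exp (u p))
include hs

theorem le_log_tsum_exp (p : α) : u p ≤ Real.log (∑' q, Real.exp (u q)) := by
  have hp : Real.exp (u p) ≤ ∑' q, Real.exp (u q) := hs.le_tsum p fun _ _ => (Real.exp_pos _).le
  rw [← Real.exp_le_exp, Real.exp_log ((Real.exp_pos _).trans_le hp)]
  exact hp

theorem finite_setOf_lt (t : ℝ) : {p | t < u p}.Finite := by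
  have hev : ∀ᶠ p in Filter.cofinite, Real.exp (u p) < Real.exp t :=
    hs.tendsto_cofinite_zero.eventually (gt_mem_nhds (Real.exp_pos t))
  exact (Filter.eventually_cofinite.mp hev).subset fun p hp => by
    simpa using (Real.exp_lt_exp.mpr hp).not_gt

theorem log_card_le {t : ℝ} {A : Finset α} (hA : ∀ p ∈ A, t < u p) (hne : A.Nonempty) :
    Real.log #A ≤ Real.log (∑' p, Real.exp (u p)) - t := by
  have hcard : #A * Real.exp t ≤ ∑' p, Real.exp (u p) :=
    calc #A * Real.exp t = ∑ _p ∈ A, Real.exp t := by rw [sum_const, nsmul_eq_mul]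
      _ ≤ ∑ p ∈ A, Real.exp (u p) := sum_le_sum fun p hp => (Real.exp_lt_exp.mpr (hA p hp)).le
      _ ≤ ∑' p, Real.exp (u p) := hs.sum_le_tsum A fun _ _ => (Real.exp_pos _).le
  have hpos : (0 : ℝ) < #A := by exact_mod_cast hne.card_pos
  rw [le_sub_iff_add_le, ← Real.log_exp t, ← Real.log_mul hpos.ne' (Real.exp_pos t).ne']
  exact Real.log_le_log (by positivity) hcard

theorem tsum_exp_mul_truncation_le {t : ℝ} (ht : t ≤ Real.log (∑' p, Real.exp (u p)))
    {A : Finset α} (hA : ∀ p ∉ A, max (u p - t) 0 = 0) :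
    ∑' p, Real.exp (u p) * max (u p - t) 0
      ≤ (∑' p, Real.exp (u p)) * (Real.log (∑' p, Real.exp (u p)) - t) := by
  rw [← tsum_mul_right]
  refine Summable.tsum_le_tsum (fun p => ?_)
    (summable_of_ne_finset_zero fun p hp => by rw [hA p hp, mul_zero]) (hs.mul_right _)
  gcongr
  exact max_le (by linarith [le_log_tsum_exp hs p]) (by linarith)

end SummableExp

/- The unit flow from the origin. On the edge from `(a, c)` to `(a + 1, c)`, `a, c ≥ 0`, it carries
`(a + 1) / ((n + 1) (n + 2))` with `n = a + c`, times `1 / 4` (`1 / 2` on the axis `c = 0`, which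
serves both half-planes), so that a total of `1` crosses every `ℓ¹`-sphere. It is extended to
`x < 0` by the reflection `x ↦ -1 - x`, which reverses horizontal edges and preserves `foldIndex`,
to `y < 0` by `y ↦ -y`, and to vertical edges by transposition. -/
noncomputable def flowProfile (a c : ℕ) : ℝ := (a + 1) / ((a + c + 1) * (a + c + 2))

def foldIndex (x : ℤ) : ℕ := (max x (-x - 1)).toNat

noncomputable def horizontalFlow (p : ℤ × ℤ) : ℝ :=
  (if p.2 = 0 then 1 / 2 else 1 / 4) * (if 0 ≤ p.1 then 1 else -1) *
    flowProfile (foldIndex p.1) p.2.natAbs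

theorem horizontalFlow_neg_sub_one (x y : ℤ) :
    horizontalFlow (-x - 1, y) = -horizontalFlow (x, y) := by
  have hfold : foldIndex (-x - 1) = foldIndex x := by simp only [foldIndex]; omega
  simp only [horizontalFlow, hfold]
  split_ifs <;> first | omega | ring

theorem horizontalFlow_neg_snd (x y : ℤ) : horizontalFlow (x, -y) = horizontalFlow (x, y) := by
  simp [horizontalFlow]

theorem horizontalFlow_natCast (a c : ℕ) :
    horizontalFlow (a, c) = (if c = 0 then 1 / 2 else 1 / 4) * flowProfile a c := by
  simp [horizontalFlow, show foldIndex a = a by simp only [foldIndex]; omega]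

theorem horizontalFlow_sub_natCast (a c : ℕ) :
    horizontalFlow (a, c) - horizontalFlow (a - 1, c)
      = (if c = 0 then 1 / 2 else 1 / 4) *
          (if a = 0 then 2 * flowProfile 0 c else flowProfile a c - flowProfile (a - 1) c) := by
  rcases a with _ | a
  · rw [show ((0 : ℕ) : ℤ) - 1 = -((0 : ℕ) : ℤ) - 1 by simp, horizontalFlow_neg_sub_one,
      horizontalFlow_natCast]
    rw [if_pos rfl]; ring
  · rw [show ((a + 1 : ℕ) : ℤ) - 1 = (a : ℤ) by push_cast; ring, horizontalFlow_natCast,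
      horizontalFlow_natCast]
    simp only [Nat.add_one_ne_zero, if_false, Nat.add_sub_cancel]; ring

theorem horizontalFlow_divergence_natCast (a c : ℕ) :
    horizontalFlow (a, c) - horizontalFlow (a - 1, c)
        + (horizontalFlow (c, a) - horizontalFlow (c - 1, a)) = if a = 0 ∧ c = 0 then 1 else 0 := by
  rw [horizontalFlow_sub_natCast, horizontalFlow_sub_natCast]
  rcases a with _ | a <;> rcases c with _ | c <;>
    simp only [Nat.add_one_ne_zero, if_true, if_false, and_false, false_and, and_self,
      Nat.add_sub_cancel, flowProfile] <;> push_cast <;> field_simp <;> ring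

theorem horizontalFlow_sub_abs (x y : ℤ) :
    horizontalFlow (x, y) - horizontalFlow (x - 1, y)
      = horizontalFlow (|x|, |y|) - horizontalFlow (|x| - 1, |y|) := by
  have hy : ∀ z, horizontalFlow (z, |y|) = horizontalFlow (z, y) := fun z => by
    rcases abs_choice y with h | h <;> rw [h]
    exact horizontalFlow_neg_snd z y
  rw [hy, hy]
  rcases abs_choice x with h | h <;> rw [h]
  rw [horizontalFlow_neg_sub_one, show -x = -(x - 1) - 1 by ring, horizontalFlow_neg_sub_one]
  ring

def unitVec : Bool → ℤ × ℤ
  | true => (1, 0)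
  | false => (0, 1)

noncomputable def latticeFlow (e : (ℤ × ℤ) × Bool) : ℝ :=
  if e.2 then horizontalFlow e.1 else horizontalFlow e.1.swap

theorem div_latticeFlow (p : ℤ × ℤ) :
    div unitVec latticeFlow p = if p = 0 then 1 else 0 := by
  obtain ⟨x, y⟩ := p
  have hdiv : div unitVec latticeFlow (x, y)
      = (horizontalFlow (x, y) - horizontalFlow (x - 1, y))
        + (horizontalFlow (y, x) - horizontalFlow (y - 1, x)) := by
    simp [div, latticeFlow, unitVec]; ring
  rw [hdiv, horizontalFlow_sub_abs x y, horizontalFlow_sub_abs y x, ← Int.natCast_natAbs x,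
    ← Int.natCast_natAbs y, horizontalFlow_divergence_natCast]
  simp [Prod.ext_iff]

noncomputable def square (M : ℕ) : Finset (ℤ × ℤ) :=
  Finset.Icc (-(M : ℤ)) M ×ˢ Finset.Icc (-(M : ℤ)) M

theorem swap_mem_square {M : ℕ} {p : ℤ × ℤ} : p.swap ∈ square M ↔ p ∈ square M := by
  simp only [square, mem_product, Prod.fst_swap, Prod.snd_swap]; tauto

theorem flowProfile_nonneg (a c : ℕ) : 0 ≤ flowProfile a c := by
  unfold flowProfile; positivity

theorem flowProfile_le (a c : ℕ) : flowProfile a c ≤ 1 / ((a : ℝ) + c + 2) := by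
  unfold flowProfile
  rw [div_le_div_iff₀ (by positivity) (by positivity)]
  nlinarith [(Nat.cast_nonneg c : (0 : ℝ) ≤ c)]

theorem horizontalFlow_sq (x y : ℤ) :
    horizontalFlow (x, y) ^ 2
      = (if y.natAbs = 0 then 1 / 4 else 1 / 16) * flowProfile (foldIndex x) y.natAbs ^ 2 := by
  simp only [horizontalFlow, Int.natAbs_eq_zero]
  split_ifs <;> ring

theorem horizontalFlow_sq_le_of_notMem_square {M : ℕ} {p : ℤ × ℤ} (hp : p ∉ square M) :
    horizontalFlow p ^ 2 ≤ 1 / (4 * ((M : ℝ) + 2) ^ 2) := by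
  obtain ⟨x, y⟩ := p
  have hshell : (M : ℝ) ≤ foldIndex x + y.natAbs := by
    simp only [square, mem_product, mem_Icc, not_and_or, not_le] at hp
    exact_mod_cast (show M ≤ foldIndex x + y.natAbs by simp only [foldIndex]; omega)
  have hfp := flowProfile_le (foldIndex x) y.natAbs
  have hfp0 := flowProfile_nonneg (foldIndex x) y.natAbs
  have hmono : 1 / ((foldIndex x : ℝ) + y.natAbs + 2) ≤ 1 / ((M : ℝ) + 2) :=
    one_div_le_one_div_of_le (by positivity) (by linarith)
  have hsq := pow_le_pow_left₀ hfp0 (hfp.trans hmono) 2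
  rw [horizontalFlow_sq]
  calc _ ≤ 1 / 4 * flowProfile (foldIndex x) y.natAbs ^ 2 := by
        gcongr; split_ifs <;> norm_num
    _ ≤ 1 / 4 * (1 / ((M : ℝ) + 2)) ^ 2 := by gcongr
    _ = _ := by field_simp

theorem latticeFlow_sq_le_of_notMem_square {M : ℕ} {e : (ℤ × ℤ) × Bool} (he : e.1 ∉ square M) :
    latticeFlow e ^ 2 ≤ 1 / (4 * ((M : ℝ) + 2) ^ 2) := by
  unfold latticeFlow
  split_ifs
  · exact horizontalFlow_sq_le_of_notMem_square he
  · exact horizontalFlow_sq_le_of_notMem_square (swap_mem_square.not.mpr he)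

theorem sum_weight_mul_flowProfile_sq_le (a M : ℕ) :
    ∑ c ∈ range (M + 1), (if c = 0 then 1 / 4 else 1 / 16) * flowProfile a c ^ 2
      ≤ 1 / (4 * ((a : ℝ) + 2) ^ 2) + 1 / (32 * ((a : ℝ) + 2)) := by
  have hA : (0 : ℝ) ≤ a := Nat.cast_nonneg a
  have tail : ∑ c ∈ range M, flowProfile a (c + 1) ^ 2 ≤ 1 / (2 * ((a : ℝ) + 2)) :=
    calc ∑ c ∈ range M, flowProfile a (c + 1) ^ 2
        = ((a : ℝ) + 1) ^ 2
            * ∑ c ∈ range M, 1 / (((a : ℝ) + c + 2) ^ 2 * ((a : ℝ) + c + 3) ^ 2) := by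
          rw [mul_sum]
          refine sum_congr rfl fun c _ => ?_
          simp only [flowProfile]; push_cast; field_simp; ring
      _ ≤ ((a : ℝ) + 1) ^ 2 * (1 / ((2 * a + 5) * ((a : ℝ) + 2) ^ 2)) := by
          gcongr; exact sum_inv_sq_mul_inv_sq_le _ hA M
      _ ≤ 1 / (2 * ((a : ℝ) + 2)) := by
          rw [mul_one_div, div_le_div_iff₀ (by positivity) (by positivity)]
          nlinarith
  rw [sum_range_succ']
  simp only [Nat.add_one_ne_zero, if_false, if_true, ← mul_sum]
  have head : flowProfile a 0 = 1 / ((a : ℝ) + 2) := by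
    simp only [flowProfile]; push_cast; field_simp; ring
  rw [head]
  calc _ ≤ 1 / 16 * (1 / (2 * ((a : ℝ) + 2))) + 1 / 4 * (1 / ((a : ℝ) + 2)) ^ 2 := by gcongr
    _ = _ := by field_simp; ring

theorem sum_square_horizontalFlow_sq_le (M : ℕ) :
    ∑ p ∈ square M, horizontalFlow p ^ 2 ≤ 1 + Real.log (M + 2) / 8 := by
  set F : ℕ → ℕ → ℝ := fun a c => (if c = 0 then 1 / 4 else 1 / 16) * flowProfile a c ^ 2
  have hF : ∀ a c, 0 ≤ F a c := fun a c => by positivity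
  have column (a : ℕ) :
      ∑ y ∈ Finset.Icc (-(M : ℤ)) M, F a y.natAbs ≤ 2 * ∑ c ∈ range (M + 1), F a c := by
    refine sum_comp_le_mul_sum (fun y hy => ?_) (fun c _ => ?_) (fun c _ => hF a c)
    · simp only [mem_Icc] at hy; simp only [mem_range]; omega
    · refine (card_le_card fun y hy => ?_).trans (card_le_two (a := (c : ℤ)) (b := -(c : ℤ)))
      simp only [mem_filter] at hy; simp only [mem_insert, mem_singleton]; omega
  calc ∑ p ∈ square M, horizontalFlow p ^ 2
      = ∑ x ∈ Finset.Icc (-(M : ℤ)) M, ∑ y ∈ Finset.Icc (-(M : ℤ)) M,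
          F (foldIndex x) y.natAbs := by
        rw [square, sum_product]
        exact sum_congr rfl fun x _ => sum_congr rfl fun y _ => horizontalFlow_sq x y
    _ ≤ ∑ x ∈ Finset.Icc (-(M : ℤ)) M, 2 * ∑ c ∈ range (M + 1), F (foldIndex x) c :=
        sum_le_sum fun x _ => column _
    _ ≤ 2 * (2 * ∑ a ∈ range (M + 1), ∑ c ∈ range (M + 1), F a c) := by
        rw [← mul_sum]
        refine mul_le_mul_of_nonneg_left (sum_comp_le_mul_sum (fun x hx => ?_) (fun a _ => ?_)
          (fun a _ => sum_nonneg fun c _ => hF a c)) zero_le_two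
        · simp only [mem_Icc] at hx; simp only [mem_range, foldIndex]; omega
        · refine (card_le_card fun x hx => ?_).trans
            (card_le_two (a := (a : ℤ)) (b := -(a : ℤ) - 1))
          simp only [mem_filter] at hx; simp only [foldIndex] at hx
          simp only [mem_insert, mem_singleton]; omega
    _ ≤ 4 * ∑ a ∈ range (M + 1), (1 / (4 * ((a : ℝ) + 2) ^ 2) + 1 / (32 * ((a : ℝ) + 2))) := by
        rw [← mul_assoc, show (2 : ℝ) * 2 = 4 by norm_num]
        exact mul_le_mul_of_nonneg_left
          (sum_le_sum fun a _ => sum_weight_mul_flowProfile_sq_le a M) zero_le_four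
    _ = ∑ a ∈ range (M + 1), 1 / ((a : ℝ) + 2) ^ 2
          + (∑ a ∈ range (M + 1), 1 / ((a : ℝ) + 2)) / 8 := by
        rw [mul_sum, sum_div, ← sum_add_distrib]
        refine sum_congr rfl fun a _ => ?_
        field_simp; ring
    _ ≤ 1 + Real.log (M + 2) / 8 := by
        have hlog := sum_range_inv_add_two_le_log (M + 1)
        push_cast at hlog
        rw [add_assoc, one_add_one_eq_two] at hlog
        gcongr
        · exact sum_range_inv_add_two_sq_le_one _

theorem sum_square_latticeFlow_sq_le (M : ℕ) :
    ∑ e ∈ square M ×ˢ (univ : Finset Bool), latticeFlow e ^ 2 ≤ 2 + Real.log (M + 2) / 4 := by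
  have swap_sum :
      ∑ p ∈ square M, horizontalFlow p.swap ^ 2 = ∑ p ∈ square M, horizontalFlow p ^ 2 :=
    sum_nbij' Prod.swap Prod.swap (fun p hp => swap_mem_square.mpr hp)
      (fun p hp => swap_mem_square.mpr hp) (fun _ _ => rfl) (fun _ _ => rfl) (fun _ _ => rfl)
  rw [sum_product]
  simp only [Fintype.sum_bool, latticeFlow, if_true, Bool.false_eq_true, if_false]
  rw [sum_add_distrib, swap_sum]
  linarith [sum_square_horizontalFlow_sq_le M]

/- With `M = ⌊√m⌋`, the edges inside `square M` carry energy `O(log M)`, and each of the at most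
`m` edges outside it carries at most `1 / (4 (M + 2) ^ 2)`. -/
theorem sum_latticeFlow_sq_le (E : Finset ((ℤ × ℤ) × Bool)) :
    ∑ e ∈ E, latticeFlow e ^ 2 ≤ Real.log (#E + 1) / 8 + 3 := by
  set M := Nat.sqrt #E
  have hM : ((M : ℝ) + 2) ^ 2 ≤ 5 * (#E + 1) := by
    have : M ^ 2 ≤ #E := Nat.sqrt_le' _
    have : (M : ℝ) ^ 2 ≤ #E := by exact_mod_cast this
    nlinarith [sq_nonneg ((M : ℝ) - 1 / 2)]
  have near : ∑ e ∈ E with e.1 ∈ square M, latticeFlow e ^ 2 ≤ 2 + Real.log (M + 2) / 4 := by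
    refine le_trans (sum_le_sum_of_subset_of_nonneg (fun e he => ?_) fun _ _ _ => sq_nonneg _)
      (sum_square_latticeFlow_sq_le M)
    simp only [mem_filter] at he
    exact mem_product.mpr ⟨he.2, mem_univ _⟩
  have far : ∑ e ∈ E with e.1 ∉ square M, latticeFlow e ^ 2 ≤ 1 / 4 := by
    have hE : (#E : ℝ) ≤ ((M : ℝ) + 1) ^ 2 := by exact_mod_cast (Nat.lt_succ_sqrt' #E).le
    calc _ ≤ ∑ _e ∈ {e ∈ E | e.1 ∉ square M}, 1 / (4 * ((M : ℝ) + 2) ^ 2) :=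
          sum_le_sum fun e he => latticeFlow_sq_le_of_notMem_square (mem_filter.mp he).2
      _ ≤ #E * (1 / (4 * ((M : ℝ) + 2) ^ 2)) := by
          rw [sum_const, nsmul_eq_mul]
          gcongr
          exact filter_subset _ _
      _ ≤ 1 / 4 := by
          rw [mul_one_div, div_le_div_iff₀ (by positivity) (by norm_num)]
          nlinarith [(Nat.cast_nonneg M : (0 : ℝ) ≤ M)]
  have hlog : Real.log (M + 2) / 4 ≤ Real.log (#E + 1) / 8 + 1 / 2 := by
    have h1 : 2 * Real.log (M + 2) ≤ Real.log 5 + Real.log (#E + 1) := by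
      have h := Real.log_le_log (by positivity) hM
      rwa [Real.log_pow, Real.log_mul (by norm_num) (by positivity)] at h
    have h2 := Real.log_le_sub_one_of_pos (show (0 : ℝ) < 5 by norm_num)
    linarith
  rw [← sum_filter_add_sum_filter_not E (fun e => e.1 ∈ square M)]
  linarith

theorem div_grad_unitVec (u : ℤ × ℤ → ℝ) (p : ℤ × ℤ) :
    div unitVec (grad unitVec u) p
      = (u p - u (p.1 + 1, p.2)) + (u p - u (p.1 - 1, p.2))
        + (u p - u (p.1, p.2 + 1)) + (u p - u (p.1, p.2 - 1)) := by
  obtain ⟨x, y⟩ := p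
  simp [div_grad, unitVec]
  ring

section Liouville

variable {u : ℤ × ℤ → ℝ} (hs : Summable fun p => Real.exp (u p))
  (hΔ : ∀ p, div unitVec (grad unitVec u) p = 4 * Real.exp (u p))
include hs hΔ

theorem sq_sub_le_of_div_grad_eq {t : ℝ} (ht : t < u 0) :
    (u 0 - t) ^ 2 ≤ ((Real.log (∑' p, Real.exp (u p)) - t) / 8 + 7 / 2)
      * (4 * (∑' p, Real.exp (u p)) * (Real.log (∑' p, Real.exp (u p)) - t)) := by
  classical
  set S := ∑' p, Real.exp (u p)
  have htS : t ≤ Real.log S := ht.le.trans (le_log_tsum_exp hs 0)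
  set A := (finite_setOf_lt hs t).toFinset
  have hmem : ∀ p, p ∈ A ↔ t < u p := fun p => by simp [A]
  set φ := fun p => max (u p - t) 0
  have hφ : ∀ p ∉ A, φ p = 0 := fun p hp =>
    max_eq_right (by linarith [not_lt.mp ((hmem p).not.mp hp)])
  set E := incidentEdges unitVec A
  have hcard : Real.log (#E + 1) ≤ 4 + (Real.log S - t) := by
    have hA : A.Nonempty := ⟨0, (hmem 0).mpr ht⟩
    have hE : (#E : ℝ) + 1 ≤ 5 * #A := by
      have hEA : #E ≤ 2 * (#A * 2) := card_incidentEdges_le unitVec A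
      have hEA' : (#E : ℝ) ≤ 2 * (#A * 2) := by exact_mod_cast hEA
      have hA1 : (1 : ℝ) ≤ #A := by exact_mod_cast hA.card_pos
      linarith
    have h5 := Real.log_le_sub_one_of_pos (show (0 : ℝ) < 5 by norm_num)
    calc Real.log (#E + 1) ≤ Real.log (5 * #A) := Real.log_le_log (by positivity) hE
      _ = Real.log 5 + Real.log #A := Real.log_mul (by norm_num) (by positivity)
      _ ≤ 4 + (Real.log S - t) := by linarith [log_card_le hs (fun p hp => (hmem p).mp hp) hA]
  have flow : ∑ e ∈ E, latticeFlow e ^ 2 ≤ (Real.log S - t) / 8 + 7 / 2 := by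
    linarith [sum_latticeFlow_sq_le E]
  have energy : ∑' e, grad unitVec φ e ^ 2 ≤ 4 * S * (Real.log S - t) := by
    refine (tsum_grad_truncation_sq_le u t hφ).trans ?_
    simp_rw [hΔ, mul_assoc, tsum_mul_left]
    exact mul_le_mul_of_nonneg_left (tsum_exp_mul_truncation_le hs htS hφ) zero_le_four
  calc (u 0 - t) ^ 2 = φ 0 ^ 2 := by simp only [φ, max_eq_left (sub_nonneg.mpr ht.le)]
    _ ≤ (∑ e ∈ E, latticeFlow e ^ 2) * ∑' e, grad unitVec φ e ^ 2 :=
        sq_le_sum_sq_mul_tsum_grad_sq div_latticeFlow hφ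
          fun e he => grad_eq_zero_of_notMem_incidentEdges hφ he
    _ ≤ _ := mul_le_mul flow energy (tsum_nonneg fun _ => sq_nonneg _) (by linarith)

theorem one_le_tsum_exp : 1 ≤ ∑' p, Real.exp (u p) := by
  by_contra! hS
  have hS0 : 0 < ∑' p, Real.exp (u p) :=
    (Real.exp_pos _).trans_le (hs.le_tsum 0 fun _ _ => (Real.exp_pos _).le)
  set δ := Real.log (∑' p, Real.exp (u p)) - u 0
  have hδ : 0 ≤ δ := by linarith [le_log_tsum_exp hs 0]
  -- With `L = log S - t`, the bound reads `(L - δ) ^ 2 ≤ (L / 8 + 7 / 2) * 4 S L`,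
  -- which fails at `L = 4 δ + 100` as soon as `S < 1`.
  have key := sq_sub_le_of_div_grad_eq hs hΔ
    (t := Real.log (∑' p, Real.exp (u p)) - (4 * δ + 100)) (by linarith)
  rw [show u 0 - (Real.log (∑' p, Real.exp (u p)) - (4 * δ + 100)) = 3 * δ + 100 by ring,
    sub_sub_cancel] at key
  nlinarith

end Liouville

theorem liouville_energy_lower_bound_Z2
    (u : ℤ × ℤ → ℝ)
    (hu : ∀ p : ℤ × ℤ,
      (1 / 4 : ℝ) * ((u (p.1 + 1, p.2) - u p) + (u (p.1 - 1, p.2) - u p)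
          + (u (p.1, p.2 + 1) - u p) + (u (p.1, p.2 - 1) - u p))
        + Real.exp (u p) = 0) :
    (4 : ENNReal) ≤ ∑' p : ℤ × ℤ, ENNReal.ofReal (4 * Real.exp (u p)) := by
  have hΔ : ∀ p, div unitVec (grad unitVec u) p = 4 * Real.exp (u p) := fun p => by
    rw [div_grad_unitVec]; linarith [hu p]
  by_contra! h
  have hs4 : Summable fun p => 4 * Real.exp (u p) := by
    simpa [ENNReal.toReal_ofReal, (Real.exp_pos _).le] using ENNReal.summable_toReal h.ne_top
  have hs : Summable fun p => Real.exp (u p) := by simpa using hs4.div_const 4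
  rw [← ENNReal.ofReal_tsum_of_nonneg (fun p => by positivity) hs4, tsum_mul_left,
    ← ENNReal.ofReal_ofNat 4, ENNReal.ofReal_lt_ofReal_iff (by norm_num)] at h
  linarith [one_le_tsum_exp hs hΔ]
end

section
/- Let G = (V,E,μ,w) be a weighted graph, let u : V → ℝ be a solution of Δu + e^u = 0, and let σ ∈ ℝ be such that Ω_σ = {x ∈ V : u(x) ≥ σ} is finite. With G(σ) := Σ_{edges {x,y}∈E, u(x) < σ ≤ u(y)} w_{xy}/(u(y) − u(x)), one has G(σ) · Σ_{x∈Ω_σ} e^{u(x)} μ_x ≥ (w(∂Ω_σ))², where w(∂Ω_σ) is the total edge weight of the boundary of Ω_σ. -/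
/-!
Summing `Δu + e^u = 0` against `μ` over `Ω = Ω_σ`, the contributions of edges inside `Ω` cancel by
symmetry of `w`, so `∑_{x ∈ Ω} e^{u x} μ_x = ∑ w_{xy} (u y - u x)`, summed over the boundary edges
with `x ∉ Ω ∋ y`. On each of them `u y - u x > 0`, and Cauchy–Schwarz applied to
`w_{xy} = √(w_{xy} / (u y - u x)) · √(w_{xy} (u y - u x))` gives the claim.
-/

open Finset

namespace SimpleGraph

variable {V : Type*} [DecidableEq V] (G : SimpleGraph V) [∀ v, Fintype (G.neighborSet v)]

/-- The boundary edges of `Ω`, as pairs `(y, x)` with `y ∉ Ω` and `x ∈ Ω`. -/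
def boundaryPairs (Ω : Finset V) : Finset (V × V) :=
  Ω.biUnion fun x => ((G.neighborFinset x).filter (fun y => y ∉ Ω)).image (·, x)

theorem mem_boundaryPairs {Ω : Finset V} {p : V × V} :
    p ∈ G.boundaryPairs Ω ↔ p.2 ∈ Ω ∧ p.1 ∈ (G.neighborFinset p.2).filter (fun y => y ∉ Ω) := by
  obtain ⟨y, x⟩ := p
  simp only [boundaryPairs, mem_biUnion, mem_image, Prod.mk.injEq]
  constructor
  · rintro ⟨x, hx, y, hy, rfl, rfl⟩
    exact ⟨hx, hy⟩
  · rintro ⟨hx, hy⟩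
    exact ⟨x, hx, y, hy, rfl, rfl⟩

theorem sum_boundaryPairs {M : Type*} [AddCommMonoid M] (Ω : Finset V) (f : V → V → M) :
    ∑ p ∈ G.boundaryPairs Ω, f p.1 p.2 =
      ∑ x ∈ Ω, ∑ y ∈ (G.neighborFinset x).filter (fun y => y ∉ Ω), f y x :=
  sum_finset_product_right' _ _ _ fun _ => G.mem_boundaryPairs

theorem sum_sum_neighborFinset_filter_mem_eq_zero (Ω : Finset V) (f : V → V → ℝ)
    (hf : ∀ x y, f x y = -f y x) :
    ∑ x ∈ Ω, ∑ y ∈ (G.neighborFinset x).filter (fun y => y ∈ Ω), f x y = 0 := by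
  have hswap : ∑ x ∈ Ω, ∑ y ∈ (G.neighborFinset x).filter (fun y => y ∈ Ω), f x y =
      ∑ y ∈ Ω, ∑ x ∈ (G.neighborFinset y).filter (fun x => x ∈ Ω), -f y x := by
    refine (sum_comm' fun x y => ?_).trans
      (sum_congr rfl fun y _ => sum_congr rfl fun x _ => hf x y)
    simp only [mem_filter, mem_neighborFinset]
    exact ⟨fun ⟨hx, hxy, hy⟩ => ⟨⟨hxy.symm, hx⟩, hy⟩, fun ⟨⟨hyx, hx⟩, hy⟩ => ⟨hx, hyx.symm, hy⟩⟩
  simp only [sum_neg_distrib] at hswap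
  linarith

theorem sum_sum_neighborFinset_eq_sum_boundaryPairs (Ω : Finset V) (f : V → V → ℝ)
    (hf : ∀ x y, f x y = -f y x) :
    ∑ x ∈ Ω, ∑ y ∈ G.neighborFinset x, f x y = -∑ p ∈ G.boundaryPairs Ω, f p.1 p.2 := by
  have hsplit : ∀ x ∈ Ω, ∑ y ∈ G.neighborFinset x, f x y =
      ∑ y ∈ (G.neighborFinset x).filter (fun y => y ∈ Ω), f x y +
        ∑ y ∈ (G.neighborFinset x).filter (fun y => y ∉ Ω), f x y :=
    fun x _ => (sum_filter_add_sum_filter_not _ _ _).symm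
  rw [sum_congr rfl hsplit, sum_add_distrib, G.sum_sum_neighborFinset_filter_mem_eq_zero Ω f hf,
    zero_add, sum_boundaryPairs, ← sum_neg_distrib]
  exact sum_congr rfl fun x _ => by rw [← sum_neg_distrib]; exact sum_congr rfl fun y _ => hf x y

theorem sum_exp_mul_eq_sum_boundaryPairs (w : V → V → ℝ) (μ : V → ℝ)
    (hw_symm : ∀ x y, w x y = w y x) (hμ : ∀ x, μ x ≠ 0) (u : V → ℝ)
    (hu : ∀ x, (∑ y ∈ G.neighborFinset x, w x y * (u y - u x)) / μ x + Real.exp (u x) = 0)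
    (Ω : Finset V) :
    ∑ x ∈ Ω, Real.exp (u x) * μ x = ∑ p ∈ G.boundaryPairs Ω, w p.1 p.2 * (u p.2 - u p.1) := by
  have hexp : ∀ x, Real.exp (u x) * μ x = -∑ y ∈ G.neighborFinset x, w x y * (u y - u x) := by
    intro x
    have h := hu x
    field_simp [hμ x] at h
    linarith
  have hanti : ∀ x y, w x y * (u y - u x) = -(w y x * (u x - u y)) := by
    intro x y
    rw [hw_symm]
    ring
  simp only [hexp, sum_neg_distrib,
    G.sum_sum_neighborFinset_eq_sum_boundaryPairs Ω (fun x y => w x y * (u y - u x)) hanti,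
    neg_neg]

end SimpleGraph

theorem sq_sum_le_sum_div_mul_sum_mul {ι : Type*} (s : Finset ι) (a d : ι → ℝ)
    (ha : ∀ i ∈ s, 0 ≤ a i) (hd : ∀ i ∈ s, 0 < d i) :
    (∑ i ∈ s, a i) ^ 2 ≤ (∑ i ∈ s, a i / d i) * ∑ i ∈ s, a i * d i := by
  refine sum_sq_le_sum_mul_sum_of_sq_le_mul s (fun i hi => div_nonneg (ha i hi) (hd i hi).le)
    (fun i hi => mul_nonneg (ha i hi) (hd i hi).le) fun i hi => ?_
  exact le_of_eq (by field_simp [(hd i hi).ne'])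

theorem G_mul_energy_ge_boundary_sq
    {V : Type*} [DecidableEq V]
    (G : SimpleGraph V) [DecidableRel G.Adj] [∀ v, Fintype (G.neighborSet v)]
    (w : V → V → ℝ) (μ : V → ℝ)
    (hw_symm : ∀ x y, w x y = w y x)
    (hw_pos : ∀ x y, G.Adj x y → 0 < w x y)
    (hμ_pos : ∀ x, 0 < μ x)
    (u : V → ℝ)
    (hu : ∀ x, (∑ y ∈ G.neighborFinset x, w x y * (u y - u x)) / μ x + Real.exp (u x) = 0)
    (σ : ℝ) (hfin : {x : V | σ ≤ u x}.Finite) :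
    (∑' p : V × V,
        if G.Adj p.1 p.2 ∧ u p.1 < σ ∧ σ ≤ u p.2
        then w p.1 p.2 / (u p.2 - u p.1) else 0)
      * ∑ x ∈ hfin.toFinset, Real.exp (u x) * μ x
    ≥ (∑ x ∈ hfin.toFinset,
        ∑ y ∈ (G.neighborFinset x).filter (fun y => y ∉ hfin.toFinset), w x y) ^ 2 := by
  set Ω := hfin.toFinset
  have hmem : ∀ p, p ∈ G.boundaryPairs Ω ↔ G.Adj p.1 p.2 ∧ u p.1 < σ ∧ σ ≤ u p.2 := by
    intro p
    simp only [G.mem_boundaryPairs, mem_filter, SimpleGraph.mem_neighborFinset, Ω,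
      Set.Finite.mem_toFinset, Set.mem_ofPred_eq, not_le]
    exact ⟨fun ⟨h2, hadj, h1⟩ => ⟨hadj.symm, h1, h2⟩, fun ⟨hadj, h1, h2⟩ => ⟨h2, hadj.symm, h1⟩⟩
  have hG : (∑' p : V × V, if G.Adj p.1 p.2 ∧ u p.1 < σ ∧ σ ≤ u p.2
      then w p.1 p.2 / (u p.2 - u p.1) else 0) =
      ∑ p ∈ G.boundaryPairs Ω, w p.1 p.2 / (u p.2 - u p.1) := by
    rw [tsum_eq_sum fun p hp => if_neg fun h => hp ((hmem p).2 h)]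
    exact sum_congr rfl fun p hp => if_pos ((hmem p).1 hp)
  have hboundary : ∑ x ∈ Ω, ∑ y ∈ (G.neighborFinset x).filter (fun y => y ∉ Ω), w x y =
      ∑ p ∈ G.boundaryPairs Ω, w p.1 p.2 := by
    simp only [G.sum_boundaryPairs, hw_symm]
  rw [ge_iff_le, hG, hboundary, G.sum_exp_mul_eq_sum_boundaryPairs w μ hw_symm
    (fun x => (hμ_pos x).ne') u hu]
  refine sq_sum_le_sum_div_mul_sum_mul _ _ _ (fun p hp => (hw_pos _ _ ((hmem p).1 hp).1).le)
    fun p hp => ?_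
  obtain ⟨-, h1, h2⟩ := (hmem p).1 hp
  linarith
end

section
/- Let G = (V,E,μ,w) be a weighted graph with finite weighted degree Deg(G) := sup_{x∈V} (Σ_{y~x} w_{xy})/μ_x < ∞, and let u : V → ℝ be a function whose superlevel sets Ω_σ = {x ∈ V : u(x) ≥ σ} are all finite and with Σ_{x∈V} e^{u(x)} μ_x < ∞. With G(σ) := Σ_{edges {x,y}∈E, u(x) < σ ≤ u(y)} w_{xy}/(u(y) − u(x)), one has ∫_{−∞}^{+∞} e^σ G(σ) (Σ_{x∈Ω_σ} e^{u(x)} μ_x) dσ ≤ Deg(G) · (Σ_{x∈V} e^{u(x)} μ_x)². -/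
open MeasureTheory Set

/-!
Bounding the mass of each superlevel set by the total mass `T = ∑ e^u μ` reduces the claim to
`∫ e^σ G(σ) dσ ≤ Deg(G) · T`. An edge with `u x < u y` contributes
`w_{xy} (e^{u y} - e^{u x}) / (u y - u x) ≤ w_{xy} e^{u y}` to the left side, by convexity of `exp`,
and the edges at a vertex `y` together contribute at most `Deg(G) · e^{u y} μ_y`.
-/

theorem Real.exp_sub_exp_le_sub_mul_exp (a b : ℝ) :
    Real.exp b - Real.exp a ≤ (b - a) * Real.exp b := by
  have h := Real.add_one_le_exp (a - b)
  have hb := Real.exp_pos b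
  rw [Real.exp_sub, le_div_iff₀ hb] at h
  linarith

theorem lintegral_exp_mul_ite_Ioc_le (a b c : ℝ) (hc : 0 ≤ c) :
    ∫⁻ σ, ENNReal.ofReal (Real.exp σ * if a < σ ∧ σ ≤ b then c / (b - a) else 0)
      ≤ ENNReal.ofReal (c * Real.exp b) := by
  rcases le_or_gt b a with hba | hab
  · have hempty : ∀ σ : ℝ, ¬(a < σ ∧ σ ≤ b) := fun σ h => by linarith [h.1, h.2]
    simp [hempty]
  have hind : (fun σ => ENNReal.ofReal (Real.exp σ * if a < σ ∧ σ ≤ b then c / (b - a) else 0))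
      = (Ioc a b).indicator fun σ => ENNReal.ofReal (Real.exp σ * (c / (b - a))) := by
    ext σ
    by_cases h : a < σ ∧ σ ≤ b <;> simp [h, indicator]
  have hk : 0 ≤ c / (b - a) := div_nonneg hc (by linarith)
  rw [hind, lintegral_indicator measurableSet_Ioc,
    ← ofReal_integral_eq_lintegral_ofReal (f := fun σ => Real.exp σ * (c / (b - a)))
      (Real.continuous_exp.mul continuous_const).integrableOn_Ioc
      (.of_forall fun σ => mul_nonneg (Real.exp_pos σ).le hk),
    integral_mul_const, ← intervalIntegral.integral_of_le hab.le, integral_exp]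
  refine ENNReal.ofReal_le_ofReal ?_
  calc (Real.exp b - Real.exp a) * (c / (b - a))
      ≤ (b - a) * Real.exp b * (c / (b - a)) :=
        mul_le_mul_of_nonneg_right (Real.exp_sub_exp_le_sub_mul_exp a b) hk
    _ = c * Real.exp b := by field_simp [(sub_pos.2 hab).ne']

theorem countable_of_finite_superlevelSets {V : Type*} (u : V → ℝ)
    (hfin : ∀ σ : ℝ, {x | σ ≤ u x}.Finite) : Countable V := by
  rw [← Set.countable_univ_iff]
  refine (Set.countable_iUnion fun n : ℕ => (hfin (-n)).countable).mono fun x _ => ?_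
  obtain ⟨n, hn⟩ := exists_nat_ge (-u x)
  exact Set.mem_iUnion.2 ⟨n, show -(n : ℝ) ≤ u x by linarith⟩

namespace SimpleGraph

variable {V : Type*} (G : SimpleGraph V) [∀ v, Fintype (G.neighborSet v)]

theorem finite_setOf_adj_snd_mem {s : Set V} (hs : s.Finite) :
    {p : V × V | G.Adj p.1 p.2 ∧ p.2 ∈ s}.Finite := by
  refine (hs.biUnion fun y _ => (G.neighborSet y).toFinite.prod (Set.finite_singleton y)).subset ?_
  rintro ⟨x, y⟩ ⟨hxy, hy⟩
  exact Set.mem_biUnion hy ⟨hxy.symm, rfl⟩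

theorem tsum_ite_adj_eq_tsum_sum_neighborFinset [DecidableRel G.Adj] (f : V → V → ENNReal) :
    ∑' p : V × V, (if G.Adj p.1 p.2 then f p.1 p.2 else 0)
      = ∑' y, ∑ x ∈ G.neighborFinset y, f x y := by
  rw [ENNReal.tsum_prod', ENNReal.tsum_comm]
  refine tsum_congr fun y => ?_
  rw [tsum_eq_sum (s := G.neighborFinset y) fun x hx => if_neg (by simpa [adj_comm] using hx)]
  exact Finset.sum_congr rfl fun x hx => if_pos ((G.mem_neighborFinset y x).1 hx).symm

variable {G} [DecidableRel G.Adj] {w : V → V → ℝ}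

theorem tsum_ite_adj_ofReal_mul_le_iSup_mul (hw_symm : ∀ x y, w x y = w y x)
    (hw_nonneg : ∀ x y, G.Adj x y → 0 ≤ w x y) {μ : V → ℝ} (hμ_pos : ∀ x, 0 < μ x)
    (hDeg_bdd : BddAbove (Set.range fun x => (∑ y ∈ G.neighborFinset x, w x y) / μ x))
    {φ : V → ℝ} (hφ : ∀ x, 0 ≤ φ x) (hsum : Summable fun x => φ x * μ x) :
    ∑' p : V × V, (if G.Adj p.1 p.2 then ENNReal.ofReal (w p.1 p.2 * φ p.2) else 0)
      ≤ ENNReal.ofReal (⨆ x, (∑ y ∈ G.neighborFinset x, w x y) / μ x)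
        * ENNReal.ofReal (∑' x, φ x * μ x) := by
  set D := ⨆ x, (∑ y ∈ G.neighborFinset x, w x y) / μ x
  have hφμ : ∀ x, 0 ≤ φ x * μ x := fun x => mul_nonneg (hφ x) (hμ_pos x).le
  rw [tsum_ite_adj_eq_tsum_sum_neighborFinset G fun x y => ENNReal.ofReal (w x y * φ y),
    ENNReal.ofReal_tsum_of_nonneg hφμ hsum, ← ENNReal.tsum_mul_left]
  refine ENNReal.tsum_le_tsum fun y => ?_
  rw [← ENNReal.ofReal_sum_of_nonneg fun x hx =>
      mul_nonneg (hw_nonneg x y ((G.mem_neighborFinset y x).1 hx).symm) (hφ y),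
    ← Finset.sum_mul, ← ENNReal.ofReal_mul' (hφμ y)]
  refine ENNReal.ofReal_le_ofReal ?_
  have hdeg : ∑ x ∈ G.neighborFinset y, w y x ≤ D * μ y :=
    (div_le_iff₀ (hμ_pos y)).1 (le_ciSup hDeg_bdd y)
  calc (∑ x ∈ G.neighborFinset y, w x y) * φ y
      = (∑ x ∈ G.neighborFinset y, w y x) * φ y := by simp only [hw_symm]
    _ ≤ D * μ y * φ y := mul_le_mul_of_nonneg_right hdeg (hφ y)
    _ = D * (φ y * μ y) := by ring

theorem lintegral_exp_mul_tsum_cut_le (hw_nonneg : ∀ x y, G.Adj x y → 0 ≤ w x y) (u : V → ℝ)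
    (hfin : ∀ σ : ℝ, {x | σ ≤ u x}.Finite) :
    ∫⁻ σ, ENNReal.ofReal (Real.exp σ * ∑' p : V × V,
        if G.Adj p.1 p.2 ∧ u p.1 < σ ∧ σ ≤ u p.2 then w p.1 p.2 / (u p.2 - u p.1) else 0)
      ≤ ∑' p : V × V,
          if G.Adj p.1 p.2 then ENNReal.ofReal (w p.1 p.2 * Real.exp (u p.2)) else 0 := by
  have := countable_of_finite_superlevelSets u hfin
  set g : V × V → ℝ → ℝ := fun p σ =>
    if G.Adj p.1 p.2 ∧ u p.1 < σ ∧ σ ≤ u p.2 then w p.1 p.2 / (u p.2 - u p.1) else 0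
  have hg_nonneg : ∀ p σ, 0 ≤ g p σ := fun p σ => by
    by_cases h : G.Adj p.1 p.2 ∧ u p.1 < σ ∧ σ ≤ u p.2
    · simpa only [g, if_pos h] using div_nonneg (hw_nonneg _ _ h.1) (by linarith [h.2.1, h.2.2])
    · simp only [g, if_neg h, le_refl]
  have hg_summable : ∀ σ, Summable (g · σ) := fun σ =>
    summable_of_hasFiniteSupport <| (G.finite_setOf_adj_snd_mem (hfin σ)).subset fun p hp => by
      by_contra h
      exact hp (if_neg fun h' => h ⟨h'.1, h'.2.2⟩)
  have hg_meas : ∀ p, Measurable (g p) := fun p =>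
    Measurable.ite ((MeasurableSet.const _).inter measurableSet_Ioc) measurable_const
      measurable_const
  calc ∫⁻ σ, ENNReal.ofReal (Real.exp σ * ∑' p, g p σ)
      = ∫⁻ σ, ∑' p, ENNReal.ofReal (Real.exp σ * g p σ) := lintegral_congr fun σ => by
        rw [← tsum_mul_left, ENNReal.ofReal_tsum_of_nonneg
          (fun p => mul_nonneg (Real.exp_pos σ).le (hg_nonneg p σ)) ((hg_summable σ).mul_left _)]
    _ = ∑' p, ∫⁻ σ, ENNReal.ofReal (Real.exp σ * g p σ) :=
        lintegral_tsum fun p => (Real.measurable_exp.mul (hg_meas p)).ennreal_ofReal.aemeasurable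
    _ ≤ _ := ENNReal.tsum_le_tsum fun p => by
        by_cases hadj : G.Adj p.1 p.2
        · simpa only [g, hadj, true_and, if_true] using
            lintegral_exp_mul_ite_Ioc_le _ _ _ (hw_nonneg _ _ hadj)
        · simp [g, hadj]

end SimpleGraph

theorem lintegral_exp_G_energy_le_Deg_mul_sq_general
    {V : Type*}
    (G : SimpleGraph V) [DecidableRel G.Adj] [∀ v, Fintype (G.neighborSet v)]
    (w : V → V → ℝ) (μ : V → ℝ)
    (hw_symm : ∀ x y, w x y = w y x)
    (hw_pos : ∀ x y, G.Adj x y → 0 < w x y)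
    (hμ_pos : ∀ x, 0 < μ x)
    (hDeg_bdd : BddAbove (Set.range fun x => (∑ y ∈ G.neighborFinset x, w x y) / μ x))
    (u : V → ℝ)
    (hfin : ∀ σ : ℝ, {x : V | σ ≤ u x}.Finite)
    (hsum : Summable fun x => Real.exp (u x) * μ x) :
    ∫⁻ σ : ℝ, ENNReal.ofReal
        (Real.exp σ
          * (∑' p : V × V,
              if G.Adj p.1 p.2 ∧ u p.1 < σ ∧ σ ≤ u p.2
              then w p.1 p.2 / (u p.2 - u p.1) else 0)
          * ∑ x ∈ (hfin σ).toFinset, Real.exp (u x) * μ x)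
      ≤ ENNReal.ofReal
          ((⨆ x, (∑ y ∈ G.neighborFinset x, w x y) / μ x)
            * (∑' x, Real.exp (u x) * μ x) ^ 2) := by
  have hw_nonneg : ∀ x y, G.Adj x y → 0 ≤ w x y := fun x y h => (hw_pos x y h).le
  have hmass_nonneg : ∀ x, 0 ≤ Real.exp (u x) * μ x := fun x =>
    mul_nonneg (Real.exp_pos _).le (hμ_pos x).le
  have hedges := (SimpleGraph.lintegral_exp_mul_tsum_cut_le hw_nonneg u hfin).trans
    (SimpleGraph.tsum_ite_adj_ofReal_mul_le_iSup_mul hw_symm hw_nonneg hμ_pos hDeg_bdd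
      (fun x => (Real.exp_pos (u x)).le) hsum)
  set T := ∑' x, Real.exp (u x) * μ x
  set D := ⨆ x, (∑ y ∈ G.neighborFinset x, w x y) / μ x
  have hD : 0 ≤ D := Real.iSup_nonneg fun x => div_nonneg
    (Finset.sum_nonneg fun y hy => hw_nonneg x y ((G.mem_neighborFinset x y).1 hy)) (hμ_pos x).le
  calc _ ≤ ENNReal.ofReal T * (ENNReal.ofReal D * ENNReal.ofReal T) := by
        grw [← hedges, ← lintegral_const_mul' _ _ ENNReal.ofReal_ne_top]
        refine lintegral_mono fun σ => ?_
        rw [ENNReal.ofReal_mul' (Finset.sum_nonneg fun x _ => hmass_nonneg x), mul_comm]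
        gcongr
        exact hsum.sum_le_tsum _ fun x _ => hmass_nonneg x
    _ = ENNReal.ofReal (D * T ^ 2) := by
        rw [← ENNReal.ofReal_mul hD, ← ENNReal.ofReal_mul (tsum_nonneg hmass_nonneg)]
        congr 1
        ring

theorem lintegral_exp_G_energy_le_Deg_mul_sq
    {V : Type*} [Nonempty V]
    (G : SimpleGraph V) [DecidableRel G.Adj] [∀ v, Fintype (G.neighborSet v)]
    (w : V → V → ℝ) (μ : V → ℝ)
    (hw_symm : ∀ x y, w x y = w y x)
    (hw_pos : ∀ x y, G.Adj x y → 0 < w x y)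
    (hμ_pos : ∀ x, 0 < μ x)
    (hDeg_bdd : BddAbove (Set.range fun x => (∑ y ∈ G.neighborFinset x, w x y) / μ x))
    (u : V → ℝ)
    (hfin : ∀ σ : ℝ, {x : V | σ ≤ u x}.Finite)
    (hsum : Summable fun x => Real.exp (u x) * μ x) :
    ∫⁻ σ : ℝ, ENNReal.ofReal
        (Real.exp σ
          * (∑' p : V × V,
              if G.Adj p.1 p.2 ∧ u p.1 < σ ∧ σ ≤ u p.2
              then w p.1 p.2 / (u p.2 - u p.1) else 0)
          * ∑ x ∈ (hfin σ).toFinset, Real.exp (u x) * μ x)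
      ≤ ENNReal.ofReal
          ((⨆ x, (∑ y ∈ G.neighborFinset x, w x y) / μ x)
            * (∑' x, Real.exp (u x) * μ x) ^ 2) :=
  lintegral_exp_G_energy_le_Deg_mul_sq_general G w μ hw_symm hw_pos hμ_pos hDeg_bdd u hfin hsum
end
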